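/- arXiv:2107.02956 — 2 statements merged into one kernel-verified Lean document; each statement's English description precedes it below -/
import Mathlib

section
/- Let σ be a signature, let 𝐃 be a σ-structure, and let ({P_i : i ∈ I}, {Q_j : j ∈ J}) be an equitable partition of 𝐃. Then for all elements d₁, d₂ of D lying in the same class P_i and every rooted ftree (𝐓,t), it holds that Hom(𝐓,t;𝐃,d₁) = Hom(𝐓,t;𝐃,d₂). -/
attribute [local instance] Classical.propDecidable

set_option maxHeartbeats 1000000

noncomputable section

/-- A relational structure over the signature given by symbols `σ` with arities `ar`,
with universe `A`: for each relation symbol, a set of tuples. -/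
structure Struct (σ : Type) (ar : σ → ℕ) (A : Type) : Type where
  rel : ∀ R : σ, Set (Fin (ar R) → A)

variable {σ : Type} {ar : σ → ℕ}

/-- The set of constraints of a structure: pairs `(R, 𝐚)` with `𝐚 ∈ R(AA)`. -/
def Cons {A : Type} (AA : Struct σ ar A) : Type :=
  Σ R : σ, {u : Fin (ar R) → A // u ∈ AA.rel R}

instance Cons.finite {A : Type} [Finite σ] [Finite A] {AA : Struct σ ar A} :
    Finite (Cons AA) :=
  inferInstanceAs (Finite (Σ R : σ, {u : Fin (ar R) → A // u ∈ AA.rel R}))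

noncomputable instance Cons.fintype {A : Type} [Fintype σ] [Fintype A] {AA : Struct σ ar A} :
    Fintype (Cons AA) := Fintype.ofFinite _

/-- Labels `(S, R)` with `R ∈ σ` and `S ⊆ [arity R]`. -/
abbrev Label (σ : Type) (ar : σ → ℕ) : Type := Σ R : σ, Finset (Fin (ar R))

/-- The entry of the matrix representation `M_AA` of a structure at `(a, R(𝐚))`:
the label `(S, R)` with `S = {i : 𝐚[i] = a}`. -/
def lab {A : Type} (AA : Struct σ ar A) (a : A) (c : Cons AA) : Label σ ar :=
  ⟨c.1, Finset.univ.filter fun i => c.2.1 i = a⟩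

/-- The 0/1 matrix `M_AA^ℓ`. -/
def labMat {A : Type} (AA : Struct σ ar A) (ℓ : Label σ ar) : Matrix A (Cons AA) ℝ :=
  fun a c => if lab AA a c = ℓ then 1 else 0

/-- A doubly stochastic matrix: non-negative entries, all rows and all columns sum to 1. -/
def IsDoublyStochastic {α β : Type} [Fintype α] [Fintype β] (X : Matrix α β ℝ) : Prop :=
  (∀ i j, 0 ≤ X i j) ∧ (∀ i, ∑ j, X i j = 1) ∧ (∀ j, ∑ i, X i j = 1)

/-- A left stochastic matrix: non-negative entries, all columns sum to 1. -/
def IsLeftStochastic {α β : Type} [Fintype α] (X : Matrix α β ℝ) : Prop :=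
  (∀ i j, 0 ≤ X i j) ∧ (∀ j, ∑ i, X i j = 1)

/-- Fractional isomorphism: doubly stochastic `X`, `Y` with
`X M_AA^ℓ = M_BB^ℓ Y` and `M_AA^ℓ Yᵀ = Xᵀ M_BB^ℓ` for every label `ℓ`. -/
def FracIso {A B : Type} [Fintype σ] [Fintype A] [Fintype B]
    (AA : Struct σ ar A) (BB : Struct σ ar B) : Prop :=
  ∃ (X : Matrix B A ℝ) (Y : Matrix (Cons BB) (Cons AA) ℝ),
    IsDoublyStochastic X ∧ IsDoublyStochastic Y ∧
    ∀ ℓ : Label σ ar,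
      X * labMat AA ℓ = labMat BB ℓ * Y ∧
      labMat AA ℓ * Y.transpose = X.transpose * labMat BB ℓ

/-- The type of iterated degrees of depth `k`. -/
def DegT (L : Type) : ℕ → Type
  | 0 => Bool
  | k + 1 => Multiset (L × DegT L k)

/-- The iterated degree `δ_k` of an element or a constraint of a structure. -/
def iterDeg {A : Type} [Fintype σ] [Fintype A] (AA : Struct σ ar A) :
    (k : ℕ) → A ⊕ Cons AA → DegT (Label σ ar) k
  | 0, x => x.isLeft
  | k + 1, Sum.inl a =>
      (Finset.univ.val.map fun c : Cons AA => (lab AA a c, iterDeg AA k (Sum.inr c)) :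
        Multiset (Label σ ar × DegT (Label σ ar) k))
  | k + 1, Sum.inr c =>
      (Finset.univ.val.map fun a : A => (lab AA a c, iterDeg AA k (Sum.inl a)) :
        Multiset (Label σ ar × DegT (Label σ ar) k))

/-- Two structures have the same iterated degree sequence. -/
def SameIterDeg {A B : Type} [Fintype σ] [Fintype A] [Fintype B]
    (AA : Struct σ ar A) (BB : Struct σ ar B) : Prop :=
  ∀ k : ℕ,
    Multiset.map (iterDeg AA k) (Finset.univ.val : Multiset (A ⊕ Cons AA)) =
    Multiset.map (iterDeg BB k) (Finset.univ.val : Multiset (B ⊕ Cons BB))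
/-- An equitable partition of a structure, given by index maps `p` (on the universe)
and `q` (on the constraints) together with its parameters `cpar`, `dpar`. -/
def IsEquitable {A : Type} (AA : Struct σ ar A) {I : Type u} {J : Type v}
    (p : A → I) (q : Cons AA → J)
    (cpar : Label σ ar → I → J → ℕ) (dpar : Label σ ar → J → I → ℕ) : Prop :=
  (∀ (a : A) (ℓ : Label σ ar) (j : J),
      Nat.card {c : Cons AA // q c = j ∧ lab AA a c = ℓ} = cpar ℓ (p a) j) ∧
  (∀ (c : Cons AA) (ℓ : Label σ ar) (i : I),
      Nat.card {a : A // p a = i ∧ lab AA a c = ℓ} = dpar ℓ (q c) i)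

/-- Two structures have a common equitable partition: equitable partitions with the same
index sets, the same parameters, and corresponding classes of equal sizes. -/
def CommonEquitable {A B : Type} (AA : Struct σ ar A) (BB : Struct σ ar B) : Prop :=
  ∃ (I J : Type) (pA : A → I) (qA : Cons AA → J) (pB : B → I) (qB : Cons BB → J)
    (cpar : Label σ ar → I → J → ℕ) (dpar : Label σ ar → J → I → ℕ),
    IsEquitable AA pA qA cpar dpar ∧ IsEquitable BB pB qB cpar dpar ∧
    (∀ i : I, Nat.card {a : A // pA a = i} = Nat.card {b : B // pB b = i}) ∧
    (∀ j : J, Nat.card {c : Cons AA // qA c = j} = Nat.card {c : Cons BB // qB c = j})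

/-- `h` is a homomorphism from `AA` to `BB`. -/
def IsHom {A B : Type} (AA : Struct σ ar A) (BB : Struct σ ar B) (h : A → B) : Prop :=
  ∀ (R : σ) (u : Fin (ar R) → A), u ∈ AA.rel R → (fun i => h (u i)) ∈ BB.rel R

/-- The number of homomorphisms from `AA` to `BB`. -/
def homCount {A B : Type} (AA : Struct σ ar A) (BB : Struct σ ar B) : ℕ :=
  Nat.card {h : A → B // IsHom AA BB h}

/-- The number of homomorphisms from `(TT, t)` to `(DD, d)` (with a designated element). -/
def rhomCount {T D : Type} (TT : Struct σ ar T) (t : T) (DD : Struct σ ar D) (d : D) : ℕ :=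
  Nat.card {h : T → D // IsHom TT DD h ∧ h t = d}

/-- The factor graph of a structure: bipartite graph on elements and constraints. -/
def factorGraph {A : Type} (AA : Struct σ ar A) : SimpleGraph (A ⊕ Cons AA) :=
  SimpleGraph.fromRel fun x y =>
    ∃ (a : A) (c : Cons AA), x = Sum.inl a ∧ y = Sum.inr c ∧ ∃ i, c.2.1 i = a

/-- A structure is an ftree if its factor graph is a tree. -/
def IsFtree {A : Type} (AA : Struct σ ar A) : Prop := (factorGraph AA).IsTree
/-- The set `{𝐚}` of elements occurring in the tuple of a constraint, as a Finset. -/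
def tsupp {A : Type} {AA : Struct σ ar A} (c : Cons AA) : Finset A :=
  Finset.univ.image c.2.1

lemma mem_tsupp {A : Type} {AA : Struct σ ar A} (c : Cons AA) (i : Fin (ar c.1)) :
    c.2.1 i ∈ tsupp c :=
  Finset.mem_image_of_mem _ (Finset.mem_univ i)

/-- Feasibility of the system `SA^k(AA, BB)`. -/
def SAfeasible {A B : Type} [Fintype B] (k : ℕ)
    (AA : Struct σ ar A) (BB : Struct σ ar B) : Prop :=
  ∃ (pV : (V : Finset A) → ({x // x ∈ V} → B) → ℝ)
    (pC : (c : Cons AA) → ({x // x ∈ tsupp c} → B) → ℝ),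
    -- all variables take values in [0,1]
    (∀ (V : Finset A) (f : {x // x ∈ V} → B),
        V.Nonempty → V.card ≤ k → 0 ≤ pV V f ∧ pV V f ≤ 1) ∧
    (∀ (c : Cons AA) (f : {x // x ∈ tsupp c} → B), 0 ≤ pC c f ∧ pC c f ≤ 1) ∧
    -- (SA1)
    (∀ V : Finset A, V.Nonempty → V.card ≤ k →
        ∑ f : {x // x ∈ V} → B, pV V f = 1) ∧
    -- (SA2)
    (∀ (U V : Finset A) (hUV : U ⊆ V), U.Nonempty → V.card ≤ k →
        ∀ f : {x // x ∈ U} → B,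
          pV U f = ∑ g : {x // x ∈ V} → B,
            if ∀ u : {x // x ∈ U}, g ⟨u.1, hUV u.2⟩ = f u then pV V g else 0) ∧
    -- (SA3)
    (∀ (c : Cons AA) (U : Finset A) (hU : U ⊆ tsupp c), U.Nonempty → U.card ≤ k →
        ∀ f : {x // x ∈ U} → B,
          pV U f = ∑ g : {x // x ∈ tsupp c} → B,
            if ∀ u : {x // x ∈ U}, g ⟨u.1, hU u.2⟩ = f u then pC c g else 0) ∧
    -- (SA4)
    (∀ (c : Cons AA) (f : {x // x ∈ tsupp c} → B),
        (fun i => f ⟨c.2.1 i, mem_tsupp c i⟩) ∉ BB.rel c.1 → pC c f = 0)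

/-- The relation symbols of the signature `σ*_k`. -/
inductive StarSym (σ : Type) (ar : σ → ℕ) (k : ℕ) : Type
  | TS (j : Fin k) (S : Finset (Fin (j.1 + 1)))
  | TI (j j' : Fin k) (iv : Fin (j'.1 + 1) → Fin (j.1 + 1))
  | RS (R : σ) (S : Finset (Fin (ar R)))
  | RI (R : σ) (j : Fin k) (iv : Fin (j.1 + 1) → Fin (ar R))

/-- Arities for `σ*_k`. -/
def starAr {k : ℕ} : StarSym σ ar k → ℕ
  | .TS _ _ => 1
  | .TI _ _ _ => 2
  | .RS _ _ => 1
  | .RI _ _ _ => 2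

/-- The universe of `AA*_k`: all tuples of length `1 ≤ j ≤ k` together with the constraints. -/
def StarUniv {A : Type} (AA : Struct σ ar A) (k : ℕ) : Type :=
  ((j : Fin k) × (Fin (j.1 + 1) → A)) ⊕ Cons AA

instance StarUniv.finite {A : Type} [Finite σ] [Finite A] {AA : Struct σ ar A} {k : ℕ} :
    Finite (StarUniv AA k) :=
  inferInstanceAs (Finite (((j : Fin k) × (Fin (j.1 + 1) → A)) ⊕ Cons AA))

noncomputable instance StarUniv.fintype {A : Type} [Fintype σ] [Fintype A]
    {AA : Struct σ ar A} {k : ℕ} : Fintype (StarUniv AA k) := Fintype.ofFinite _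

/-- The structure `AA*_k`. -/
def starStruct {A : Type} (AA : Struct σ ar A) (k : ℕ) :
    Struct (StarSym σ ar k) starAr (StarUniv AA k) where
  rel
    | .TS j S => {u | ∃ v : Fin (j.1 + 1) → A,
        (∀ i ∈ S, ∀ i' ∈ S, v i = v i') ∧ u = fun _ => Sum.inl ⟨j, v⟩}
    | .TI j j' iv => {u | ∃ v : Fin (j.1 + 1) → A,
        u = ![Sum.inl ⟨j, v⟩, Sum.inl ⟨j', v ∘ iv⟩]}
    | .RS R S => {u | ∃ (v : Fin (ar R) → A) (hv : v ∈ AA.rel R),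
        (∀ i ∈ S, ∀ i' ∈ S, v i = v i') ∧ u = fun _ => Sum.inr ⟨R, ⟨v, hv⟩⟩}
    | .RI R j iv => {u | ∃ (v : Fin (ar R) → A) (hv : v ∈ AA.rel R),
        u = ![Sum.inr ⟨R, ⟨v, hv⟩⟩, Sum.inl ⟨j, v ∘ iv⟩]}

/-- `AA ≡_k BB` : the structures `AA*_k` and `BB*_k` have a common equitable partition. -/
def EquivK {A B : Type} (k : ℕ) (AA : Struct σ ar A) (BB : Struct σ ar B) : Prop :=
  CommonEquitable (starStruct AA k) (starStruct BB k)

/-- A bundled σ-structure with finite universe. -/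
structure FinStruct (σ : Type) (ar : σ → ℕ) : Type 1 where
  carrier : Type
  [fin : Fintype carrier]
  str : Struct σ ar carrier

/-- One step in a chain: either a homomorphism exists, or the structures are
`≡_1`-equivalent (i.e. have a common equitable partition). -/
def FStep (X Y : FinStruct σ ar) : Prop :=
  (∃ h : X.carrier → Y.carrier, IsHom X.str Y.str h) ∨ CommonEquitable X.str Y.str

/-- The structure `AA` has treewidth `< k`: there is a tree-decomposition all of whose
bags have at most `k` elements. -/
def HasTreewidthLT {A : Type} (AA : Struct σ ar A) (k : ℕ) : Prop :=
  ∃ (V : Type) (G : SimpleGraph V) (β : V → Finset A),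
    G.IsTree ∧
    (∀ c : Cons AA, ∃ v : V, ∀ i, c.2.1 i ∈ β v) ∧
    (∀ (a : A) (u v : V), a ∈ β u → a ∈ β v →
      ∀ p : G.Walk u v, p.IsPath → ∀ w ∈ p.support, a ∈ β w) ∧
    (∀ v : V, (β v).card ≤ k)
/-- The adjacency matrix of a graph (a structure with one binary relation). -/
def adjMat {A : Type} (AA : Struct Unit (fun _ => 2) A) : Matrix A A ℝ :=
  fun a a' => if ![a, a'] ∈ AA.rel () then 1 else 0

/-- A matrix is decomposable if, up to partitioning rows and columns into two
(nontrivial) blocks, it is a direct sum. -/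
def MDecomposable {V W : Type} (M : Matrix V W ℝ) : Prop :=
  ∃ (SV : Set V) (SW : Set W),
    (SV.Nonempty ∨ SW.Nonempty) ∧ (SVᶜ.Nonempty ∨ SWᶜ.Nonempty) ∧
    ∀ v w, (v ∈ SV ∧ w ∉ SW) ∨ (v ∉ SV ∧ w ∈ SW) → M v w = 0

/-- A bundled rooted ftree. -/
structure RootedFtree (σ : Type) (ar : σ → ℕ) : Type 1 where
  carrier : Type
  [fin : Fintype carrier]
  str : Struct σ ar carrier
  isFtree : IsFtree str
  root : carrier

/-- The profile of an element: the number of homomorphisms from each rooted ftree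
mapping the root to it. -/
def degProfile {D : Type} (DD : Struct σ ar D) (d : D) : RootedFtree σ ar → ℕ :=
  fun F => rhomCount F.str F.root DD d

/-- The class of a constraint: its relation symbol, its equality pattern, and the
`degProfile`-classes of its coordinates. -/
def qProfile {D : Type} (DD : Struct σ ar D) (c : Cons DD) :
    Σ R : σ, Set (Fin (ar R) × Fin (ar R)) × (Fin (ar R) → (RootedFtree σ ar → ℕ)) :=
  ⟨c.1, ({p | c.2.1 p.1 = c.2.1 p.2}, fun s => degProfile DD (c.2.1 s))⟩

/-- Number of homomorphisms with a designated element and a designated constraint. -/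
def rhomCount2 {T D : Type} (TT : Struct σ ar T) (t : T) (c : Cons TT)
    (DD : Struct σ ar D) (d : D) (c' : Cons DD) : ℕ :=
  Nat.card {h : T → D // IsHom TT DD h ∧ h t = d ∧
    (⟨c.1, fun i => h (c.2.1 i)⟩ : Σ R : σ, Fin (ar R) → D) = ⟨c'.1, c'.2.1⟩}

/-- `(t, R(𝐭))` can be mapped to `(d, R'(𝐝))`. -/
def CanMap {T D : Type} {TT : Struct σ ar T} {DD : Struct σ ar D}
    (t : T) (c : Cons TT) (d : D) (c' : Cons DD) : Prop :=
  ∃ hR : c.1 = c'.1,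
    (∀ s s' : Fin (ar c.1), c.2.1 s = c.2.1 s' →
        c'.2.1 (Fin.cast (congrArg ar hR) s) = c'.2.1 (Fin.cast (congrArg ar hR) s')) ∧
    (∀ s : Fin (ar c.1), c.2.1 s = t → c'.2.1 (Fin.cast (congrArg ar hR) s) = d)

/-- A substructure of a structure: a subset of the universe together with a subset of
the tuples of each relation, lying inside the subset. -/
structure Substr {A : Type} (AA : Struct σ ar A) : Type where
  carrier : Set A
  srel : ∀ R : σ, Set (Fin (ar R) → A)
  srel_sub : ∀ R : σ, srel R ⊆ AA.rel R
  srel_mem : ∀ R : σ, ∀ u ∈ srel R, ∀ i, u i ∈ carrier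

/-- The substructure as a structure in its own right. -/
def Substr.toStruct {A : Type} {AA : Struct σ ar A} (Q : Substr AA) :
    Struct σ ar {x // x ∈ Q.carrier} where
  rel R := {u | (fun i => (u i).1) ∈ Q.srel R}

/-- Containment of substructures. -/
def Substr.le {A : Type} {AA : Struct σ ar A} (Q Q' : Substr AA) : Prop :=
  Q.carrier ⊆ Q'.carrier ∧ ∀ R : σ, Q.srel R ⊆ Q'.srel R

/-- A subftree of `TT` avoiding the constraint `c`, containing a unique element of the
tuple of `c`, which moreover participates in exactly one constraint of the subftree. -/
def GoodPiece {T : Type} (TT : Struct σ ar T) (c : Cons TT) (Q : Substr TT) : Prop :=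
  IsFtree Q.toStruct ∧
  c.2.1 ∉ Q.srel c.1 ∧
  ∃ x ∈ Q.carrier, (∃ i, c.2.1 i = x) ∧
    (∀ y ∈ Q.carrier, (∃ i, c.2.1 i = y) → y = x) ∧
    (∃! e : Σ R : σ, {u // u ∈ Q.srel R}, ∃ i, e.2.1 i = x)

/-- The collection `TT \ c` of maximal subftrees as above. -/
def TreeMinus {T : Type} (TT : Struct σ ar T) (c : Cons TT) : Set (Substr TT) :=
  {Q | GoodPiece TT c Q ∧ ∀ Q' : Substr TT, GoodPiece TT c Q' → Q.le Q' → Q'.le Q}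

/-- The disjoint union of two structures. -/
def dUnion {A B : Type} (AA : Struct σ ar A) (BB : Struct σ ar B) :
    Struct σ ar (A ⊕ B) where
  rel R := {u | (∃ v ∈ AA.rel R, u = fun i => Sum.inl (v i)) ∨
                (∃ v ∈ BB.rel R, u = fun i => Sum.inr (v i))}

/-- Embedding of constraints of `AA` into constraints of the disjoint union. -/
def consInl {A B : Type} (AA : Struct σ ar A) (BB : Struct σ ar B) (c : Cons AA) :
    Cons (dUnion AA BB) :=
  ⟨c.1, ⟨fun i => Sum.inl (c.2.1 i), Or.inl ⟨c.2.1, c.2.2, rfl⟩⟩⟩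

/-- Embedding of constraints of `BB` into constraints of the disjoint union. -/
def consInr {A B : Type} (AA : Struct σ ar A) (BB : Struct σ ar B) (c : Cons BB) :
    Cons (dUnion AA BB) :=
  ⟨c.1, ⟨fun i => Sum.inr (c.2.1 i), Or.inr ⟨c.2.1, c.2.2, rfl⟩⟩⟩

/-- The stable-degree class of an element of the disjoint union: its full iterated
degree sequence. -/
def degPclass {A B : Type} [Fintype σ] [Fintype A] [Fintype B]
    (AA : Struct σ ar A) (BB : Struct σ ar B) (x : A ⊕ B) :
    (k : ℕ) → DegT (Label σ ar) k :=
  fun k => iterDeg (dUnion AA BB) k (Sum.inl x)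

/-- The stable-degree class of a constraint of the disjoint union. -/
def degQclass {A B : Type} [Fintype σ] [Fintype A] [Fintype B]
    (AA : Struct σ ar A) (BB : Struct σ ar B) (c : Cons (dUnion AA BB)) :
    (k : ℕ) → DegT (Label σ ar) k :=
  fun k => iterDeg (dUnion AA BB) k (Sum.inr c)
/-- The set `Y`: tuples in `(B × [m])^m` with no repeated entries, in which the copy
index of each entry is bounded by the number of occurrences of its `B`-component. -/
def Ytype (B : Type) (m : ℕ) : Type :=
  {y : Fin m → B × Fin m // Function.Injective y ∧
    ∀ i, ((y i).2 : ℕ) + 1 ≤ Nat.card {j : Fin m // (y j).1 = (y i).1}}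

/-- Permuting the coordinates of an element of `Y`. -/
def permY {B : Type} {m : ℕ} (τ : Equiv.Perm (Fin m)) (y : Ytype B m) : Ytype B m :=
  ⟨fun i => y.1 (τ i), y.2.1.comp τ.injective, fun i => by
    have h := y.2.2 (τ i)
    have hc : Nat.card {j : Fin m // (y.1 (τ j)).1 = (y.1 (τ i)).1}
        = Nat.card {j : Fin m // (y.1 j).1 = (y.1 (τ i)).1} :=
      Nat.card_congr (τ.subtypeEquiv fun j => Iff.rfl)
    exact le_trans h (le_of_eq hc.symm)⟩

/-- The structure `X₁` from the proof of Theorem `thm:SA1`, built from a choice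
function `choice` selecting a canonical element of `Y` for each multiset. -/
def X1struct {A B : Type} (AA : Struct σ ar A) (BB : Struct σ ar B) (m : ℕ)
    (choice : (Fin m → B) → Ytype B m) : Struct σ ar (A × Ytype B m) where
  rel R := {u | ∃ a : Fin (ar R) → A, a ∈ AA.rel R ∧
    ∃ tt : Fin m → Fin (ar R) → B,
      (∀ i, tt i ∈ BB.rel R) ∧
      (∀ i s s', a s = a s' → tt i s = tt i s') ∧
      ∃ τ : Equiv.Perm (Fin m),
        u = fun s => (a s, permY τ (choice fun i => tt i s))}


/-!
Induction on the number of constraints of the ftree `TT`. Pick a constraint `c = R(𝐚)`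
containing the root `t = 𝐚[s]`. Deleting `c` splits `TT` into branches, one at each element
of `𝐚`, so the homomorphisms sending `𝐚` to a tuple `𝐮` are counted by a product of rooted
counts of the branches, and `Hom(TT, t; DD, d)` is the sum over `𝐮 ∈ R(DD)` with `𝐮[s] = d`
of these weights of `𝐮`. By the parameters `d` of the partition, two tuples in the same class
`Q_j` have entrywise the same `P`-classes and the same pattern of equal entries, so by
induction their weights agree; by the parameters `c`, the number of tuples with `𝐮[s] = d`
in `Q_j` depends only on the class of `d`.
-/

open Finset SimpleGraph

section FactorTree

variable {T : Type} {TT : Struct σ ar T}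

lemma factorGraph_adj_inl_inr {a : T} {e : Cons TT} :
    (factorGraph TT).Adj (Sum.inl a) (Sum.inr e) ↔ ∃ i, e.2.1 i = a := by
  simp [factorGraph, eq_comm]

lemma factorGraph_adj_inr_inl {a : T} {e : Cons TT} :
    (factorGraph TT).Adj (Sum.inr e) (Sum.inl a) ↔ ∃ i, e.2.1 i = a :=
  (factorGraph TT).adj_comm _ _ |>.trans factorGraph_adj_inl_inr

lemma not_factorGraph_adj_inl_inl {a a' : T} :
    ¬ (factorGraph TT).Adj (Sum.inl a) (Sum.inl a') := by
  simp [factorGraph]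

lemma not_factorGraph_adj_inr_inr {e e' : Cons TT} :
    ¬ (factorGraph TT).Adj (Sum.inr e) (Sum.inr e') := by
  simp [factorGraph]

lemma IsFtree.nonempty_arity (h : IsFtree TT) [Nontrivial (T ⊕ Cons TT)] (e : Cons TT) :
    Nonempty (Fin (ar e.1)) := by
  obtain ⟨x | e', hx⟩ := h.connected.preconnected.exists_adj_of_nontrivial (Sum.inr e)
  · exact ⟨(factorGraph_adj_inr_inl.1 hx).choose⟩
  · exact (not_factorGraph_adj_inr_inr hx).elim

lemma IsFtree.exists_cons_mem (h : IsFtree TT) [Nontrivial (T ⊕ Cons TT)] (t : T) :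
    ∃ (c : Cons TT) (s : Fin (ar c.1)), c.2.1 s = t := by
  obtain ⟨x | c, hx⟩ := h.connected.preconnected.exists_adj_of_nontrivial (Sum.inl t)
  · exact (not_factorGraph_adj_inl_inl hx).elim
  · exact ⟨c, factorGraph_adj_inl_inr.1 hx⟩

variable (TT) in
def AdjExcept (c : Cons TT) (a a' : T) : Prop :=
  ∃ e : Cons TT, e ≠ c ∧ (∃ i, e.2.1 i = a) ∧ ∃ i, e.2.1 i = a'

def ReachExcept (c : Cons TT) (b a : T) : Prop :=
  Relation.ReflTransGen (AdjExcept TT c) b a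

@[refl]
lemma ReachExcept.refl {c : Cons TT} {b : T} : ReachExcept c b b :=
  Relation.ReflTransGen.refl

lemma ReachExcept.symm {c : Cons TT} {b a : T} (h : ReachExcept c b a) :
    ReachExcept c a b := by
  induction h with
  | refl => exact .refl
  | tail _ hstep ih =>
    obtain ⟨e, hne, ha, ha'⟩ := hstep
    exact Relation.ReflTransGen.head ⟨e, hne, ha', ha⟩ ih

lemma ReachExcept.of_mem {c e : Cons TT} (hne : e ≠ c) {b : T} {i : Fin (ar e.1)}
    (h : ReachExcept c b (e.2.1 i)) (j : Fin (ar e.1)) : ReachExcept c b (e.2.1 j) :=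
  h.tail ⟨e, hne, ⟨i, rfl⟩, ⟨j, rfl⟩⟩

lemma ReachExcept.reachable_deleteEdges {c : Cons TT} {b a : T} (h : ReachExcept c b a)
    (b' : T) : ((factorGraph TT).deleteEdges {s(Sum.inl b', Sum.inr c)}).Reachable
      (Sum.inl b) (Sum.inl a) := by
  induction h with
  | refl => rfl
  | tail _ hstep ih =>
    obtain ⟨e, hne, hi, hj⟩ := hstep
    have adj (x : T) (hx : ∃ i, e.2.1 i = x) :
        ((factorGraph TT).deleteEdges {s(Sum.inl b', Sum.inr c)}).Adj
          (Sum.inl x) (Sum.inr e) := by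
      rw [deleteEdges_adj]
      exact ⟨factorGraph_adj_inl_inr.2 hx, by simp [hne]⟩
    exact ih.trans ((adj _ hi).reachable.trans (adj _ hj).reachable.symm)

lemma IsFtree.eq_of_reachExcept (h : IsFtree TT) {c : Cons TT} {b b' a : T}
    (hb : b ∈ tsupp c) (hb' : b' ∈ tsupp c) (ha : ReachExcept c b a)
    (ha' : ReachExcept c b' a) : b = b' := by
  obtain ⟨i, -, rfl⟩ := mem_image.1 hb
  obtain ⟨j, -, rfl⟩ := mem_image.1 hb'
  by_contra hne
  -- a detour from `c i` to `c j` avoiding `c` would show that the edge `c i — c` is no bridge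
  have hbridge := isAcyclic_iff_forall_adj_isBridge.1 h.isAcyclic
    (factorGraph_adj_inl_inr.2 ⟨i, rfl⟩)
  refine isBridge_iff.1 hbridge
    ((ReachExcept.reachable_deleteEdges (ha.trans ha'.symm) _).trans (Adj.reachable ?_).symm)
  rw [deleteEdges_adj]
  exact ⟨factorGraph_adj_inr_inl.2 ⟨j, rfl⟩, by simp [Ne.symm hne]⟩

lemma IsFtree.exists_reachExcept (h : IsFtree TT) (c : Cons TT) (a : T) :
    ∃ i, ReachExcept c (c.2.1 i) a := by
  let P : T ⊕ Cons TT → Prop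
    | .inl a => ∃ i, ReachExcept c (c.2.1 i) a
    | .inr e => e ≠ c → ∃ j i, ReachExcept c (c.2.1 i) (e.2.1 j)
  have hP : ∀ x y, (factorGraph TT).Adj x y → P x → P y := by
    rintro (a | e) (a' | e') hadj hx
    · exact (not_factorGraph_adj_inl_inl hadj).elim
    · obtain ⟨j, rfl⟩ := factorGraph_adj_inl_inr.1 hadj
      exact fun _ => ⟨j, hx⟩
    · obtain ⟨j, rfl⟩ := factorGraph_adj_inr_inl.1 hadj
      by_cases he : e = c
      · subst he
        exact ⟨j, .refl⟩
      · obtain ⟨j', i, hi⟩ := hx he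
        exact ⟨i, hi.of_mem he j⟩
    · exact (not_factorGraph_adj_inr_inr hadj).elim
  suffices ∀ y, Relation.ReflTransGen (factorGraph TT).Adj (Sum.inr c) y → P y from
    this (Sum.inl a) ((reachable_iff_reflTransGen _ _).1 (h.connected.preconnected _ _))
  intro y hy
  induction hy with
  | refl => exact fun hc => (hc rfl).elim
  | tail _ hadj ih => exact hP _ _ hadj ih

/-- The component of `b` in the ftree `TT` with the constraint `c` removed. -/
def branch (c : Cons TT) (b : T) : Struct σ ar {a // ReachExcept c b a} where
  rel R := {u | ∃ hu : (fun i => (u i).1) ∈ TT.rel R, (⟨R, _, hu⟩ : Cons TT) ≠ c}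

lemma mem_branch_rel {c e : Cons TT} (hne : e ≠ c) {b : T}
    (hall : ∀ j, ReachExcept c b (e.2.1 j)) :
    (fun j => (⟨e.2.1 j, hall j⟩ : {a // ReachExcept c b a})) ∈ (branch c b).rel e.1 :=
  ⟨e.2.2, hne⟩

def branch.consVal {c : Cons TT} {b : T} (e : Cons (branch c b)) : Cons TT :=
  ⟨e.1, _, e.2.2.1⟩

lemma branch.consVal_ne {c : Cons TT} {b : T} (e : Cons (branch c b)) : consVal e ≠ c :=
  e.2.2.2

lemma branch.consVal_injective {c : Cons TT} {b : T} :
    Function.Injective (consVal : Cons (branch c b) → Cons TT) := by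
  rintro ⟨R, u, hu⟩ ⟨R', u', hu'⟩ h
  obtain ⟨rfl, h⟩ := Sigma.mk.inj_iff.1 h
  obtain rfl : u = u' :=
    funext fun i => Subtype.ext (congrFun (Subtype.ext_iff.1 (eq_of_heq h)) i)
  rfl

lemma card_cons_branch_lt [Fintype σ] [Fintype T] (c : Cons TT) (b : T) :
    Nat.card (Cons (branch c b)) < Nat.card (Cons TT) := by
  simp only [Nat.card_eq_fintype_card]
  exact Fintype.card_lt_of_injective_of_notMem _ branch.consVal_injective
    (fun ⟨e, he⟩ => branch.consVal_ne e he)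

lemma branch.reachable_root {c : Cons TT} {b : T} (a : T) (ha : ReachExcept c b a) :
    (factorGraph (branch c b)).Reachable (Sum.inl ⟨b, .refl⟩) (Sum.inl ⟨a, ha⟩) := by
  induction ha with
  | refl => rfl
  | @tail a' a hba' hstep ih =>
    obtain ⟨e, hne, ⟨i, rfl⟩, ⟨j, rfl⟩⟩ := hstep
    have hall := ReachExcept.of_mem hne hba'
    let e' : Cons (branch c b) := ⟨e.1, _, mem_branch_rel hne hall⟩
    have hi : (factorGraph (branch c b)).Adj (Sum.inl ⟨_, hba'⟩) (Sum.inr e') :=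
      factorGraph_adj_inl_inr.2 ⟨i, rfl⟩
    have hj : (factorGraph (branch c b)).Adj (Sum.inr e') (Sum.inl ⟨_, hall j⟩) :=
      factorGraph_adj_inr_inl.2 ⟨j, rfl⟩
    exact ih.trans (hi.reachable.trans hj.reachable)

lemma isFtree_branch (h : IsFtree TT) (c : Cons TT) (b : T) : IsFtree (branch c b) := by
  let f : factorGraph (branch c b) →g factorGraph TT :=
    { toFun := Sum.map Subtype.val branch.consVal
      map_rel' := by
        rintro (a | e) (a' | e') hadj
        · exact (not_factorGraph_adj_inl_inl hadj).elim
        · obtain ⟨i, rfl⟩ := factorGraph_adj_inl_inr.1 hadj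
          exact factorGraph_adj_inl_inr.2 ⟨i, rfl⟩
        · obtain ⟨i, rfl⟩ := factorGraph_adj_inr_inl.1 hadj
          exact factorGraph_adj_inr_inl.2 ⟨i, rfl⟩
        · exact (not_factorGraph_adj_inr_inr hadj).elim }
  have reach : ∀ x, (factorGraph (branch c b)).Reachable (Sum.inl ⟨b, .refl⟩) x := by
    rintro (⟨a, ha⟩ | e)
    · exact branch.reachable_root a ha
    · have : Nontrivial (T ⊕ Cons TT) :=
        ⟨Sum.inl b, Sum.inr (branch.consVal e), Sum.inl_ne_inr⟩
      obtain ⟨i⟩ := h.nonempty_arity (branch.consVal e)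
      have hi : (factorGraph (branch c b)).Adj (Sum.inl (e.2.1 i)) (Sum.inr e) :=
        factorGraph_adj_inl_inr.2 ⟨i, rfl⟩
      exact (branch.reachable_root _ (e.2.1 i).2).trans hi.reachable
  exact ⟨connected_iff_exists_forall_reachable _ |>.2 ⟨_, reach⟩,
    h.isAcyclic.comap f (Subtype.val_injective.sumMap branch.consVal_injective)⟩

end FactorTree

lemma sum_subtype_eq_of_card_fiber_eq {X J : Type} [Fintype X] {g : X → J} {w : X → ℕ}
    (hw : w.FactorsThrough g) {S S' : X → Prop}
    (hS : ∀ j, Nat.card {x // S x ∧ g x = j} = Nat.card {x // S' x ∧ g x = j}) :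
    ∑ x : {x // S x}, w x = ∑ x : {x // S' x}, w x := by
  have hfac (x : X) : w x = Function.extend g w 0 (g x) :=
    (hw.extend_apply 0 x).symm
  have hsum (S : X → Prop) : ∑ x : {x // S x}, w x =
      ∑ j ∈ univ.image g, Nat.card {x // S x ∧ g x = j} * Function.extend g w 0 j := by
    rw [← sum_subtype (univ.filter S) (by simp),
      ← sum_fiberwise_of_maps_to (g := g) (t := univ.image g) (by simp)]
    refine sum_congr rfl fun j _ => ?_
    rw [sum_congr rfl (g := fun _ => Function.extend g w 0 j), sum_const,
      smul_eq_mul, Nat.card_eq_fintype_card, Fintype.card_subtype, filter_filter]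
    intro x hx
    rw [hfac x, (mem_filter.1 hx).2]
  rw [hsum S, hsum S']
  simp only [hS]

section Equitable

variable {D I J : Type} {DD : Struct σ ar D} {p : D → I} {q : Cons DD → J}
  {cpar : Label σ ar → I → J → ℕ} {dpar : Label σ ar → J → I → ℕ}

lemma IsEquitable.card_lab_eq [Fintype σ] [Fintype D] (heq : IsEquitable DD p q cpar dpar)
    (Φ : Label σ ar → Prop) (j : J) {d₁ d₂ : D} (hd : p d₁ = p d₂) :
    Nat.card {c // Φ (lab DD d₁ c) ∧ q c = j} =
      Nat.card {c // Φ (lab DD d₂ c) ∧ q c = j} := by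
  have key (d : D) :
      Nat.card {c // Φ (lab DD d c) ∧ q c = j} =
        ∑ ℓ ∈ univ.filter Φ, cpar ℓ (p d) j := by
    rw [Nat.card_eq_fintype_card, Fintype.card_subtype,
      card_eq_sum_card_fiberwise (f := lab DD d) (t := univ.filter Φ) (fun c hc => by simp_all)]
    refine sum_congr rfl fun ℓ hℓ => ?_
    rw [← heq.1 d ℓ j, Nat.card_eq_fintype_card, Fintype.card_subtype, filter_filter]
    congr 1
    ext c
    simp only [mem_filter, mem_univ, true_and] at hℓ ⊢
    constructor
    · exact fun ⟨⟨_, hq⟩, hl⟩ => ⟨hq, hl⟩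
    · exact fun ⟨hq, hl⟩ => ⟨⟨hl ▸ hℓ, hq⟩, hl⟩
  rw [key, key, hd]

lemma IsEquitable.exists_lab_eq [Finite D] (heq : IsEquitable DD p q cpar dpar)
    {c c' : Cons DD} (hq : q c = q c') (a : D) :
    ∃ a', p a' = p a ∧ lab DD a' c' = lab DD a c := by
  have hpos : 0 < Nat.card {x // p x = p a ∧ lab DD x c = lab DD a c} :=
    Nat.card_pos_iff.2 ⟨⟨a, rfl, rfl⟩, inferInstance⟩
  rw [heq.2, hq, ← heq.2] at hpos
  obtain ⟨⟨a', h⟩⟩ := (Nat.card_pos_iff.1 hpos).1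
  exact ⟨a', h⟩

lemma IsEquitable.tuple_congr [Finite D] (heq : IsEquitable DD p q cpar dpar) {R : σ}
    {u u' : Fin (ar R) → D} {hu : u ∈ DD.rel R} {hu' : u' ∈ DD.rel R}
    (hq : q ⟨R, u, hu⟩ = q ⟨R, u', hu'⟩) (s : Fin (ar R)) :
    p (u' s) = p (u s) ∧ ∀ s', u' s' = u' s ↔ u s' = u s := by
  obtain ⟨a, hpa, hlab⟩ := heq.exists_lab_eq hq (u s)
  have hfilter : (univ.filter fun i => u' i = a) = univ.filter fun i => u i = u s :=
    eq_of_heq (Sigma.mk.inj_iff.1 hlab).2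
  have hiff (s' : Fin (ar R)) : u' s' = a ↔ u s' = u s := by
    simpa using congrArg (s' ∈ ·) hfilter
  obtain rfl : u' s = a := (hiff s).2 rfl
  exact ⟨hpa, hiff⟩

end Equitable

lemma card_rel_eval_eq {D : Type} (DD : Struct σ ar D) (R : σ) (s : Fin (ar R)) (d : D)
    (P : Cons DD → Prop) :
    Nat.card {u : {u // u ∈ DD.rel R} // u.1 s = d ∧ P ⟨R, u⟩} =
      Nat.card {c : Cons DD // (∃ S, lab DD d c = ⟨R, S⟩ ∧ s ∈ S) ∧ P c} := by
  refine Nat.card_eq_of_bijective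
    (fun u => ⟨⟨R, u.1⟩, ⟨_, rfl, by simpa using u.2.1⟩, u.2.2⟩) ⟨?_, ?_⟩
  · rintro ⟨u, _⟩ ⟨u', _⟩ h
    exact Subtype.ext (eq_of_heq (Sigma.mk.inj_iff.1 (congrArg Subtype.val h)).2)
  · rintro ⟨⟨R', u, hu⟩, ⟨S, hS, hs⟩, hP⟩
    obtain ⟨rfl, hS⟩ := Sigma.mk.inj_iff.1 hS
    refine ⟨⟨⟨u, hu⟩, ?_, hP⟩, rfl⟩
    rw [← eq_of_heq hS] at hs
    simpa using hs

section Gluing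

variable {T D : Type} {TT : Struct σ ar T} {DD : Struct σ ar D}

def IsFtree.branchSigmaEquiv (h : IsFtree TT) (c : Cons TT) :
    (Σ b : {x // x ∈ tsupp c}, {a // ReachExcept c b a}) ≃ T :=
  Equiv.ofBijective (fun x => x.2.1) ⟨by
    rintro ⟨b, a, ha⟩ ⟨b', a', ha'⟩ (rfl : a = a')
    obtain rfl := Subtype.ext (h.eq_of_reachExcept b.2 b'.2 ha ha')
    rfl, fun a => by
    obtain ⟨i, hi⟩ := h.exists_reachExcept c a
    exact ⟨⟨⟨c.2.1 i, mem_tsupp c i⟩, a, hi⟩, rfl⟩⟩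

lemma IsFtree.isHom_iff (h : IsFtree TT) (c : Cons TT) (f : T → D) :
    IsHom TT DD f ↔ (fun i => f (c.2.1 i)) ∈ DD.rel c.1 ∧
      ∀ b : {x // x ∈ tsupp c}, IsHom (branch c b.1) DD (fun x => f x.1) := by
  refine ⟨fun hf => ⟨hf _ _ c.2.2, fun b R u hu => hf R _ hu.1⟩, ?_⟩
  rintro ⟨hc, hb⟩ R u hu
  by_cases hec : (⟨R, u, hu⟩ : Cons TT) = c
  · subst hec
    exact hc
  · have : Nontrivial (T ⊕ Cons TT) :=
      ⟨Sum.inr ⟨R, u, hu⟩, Sum.inr c, fun h => hec (Sum.inr_injective h)⟩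
    obtain ⟨i₀⟩ := h.nonempty_arity ⟨R, u, hu⟩
    obtain ⟨j, hj⟩ := h.exists_reachExcept c (u i₀)
    exact hb ⟨_, mem_tsupp c j⟩ R _ (mem_branch_rel hec (ReachExcept.of_mem hec hj))

variable (DD) in
def tupleHomCount (c : Cons TT) (u : Fin (ar c.1) → D) : ℕ :=
  Nat.card {f : T → D // IsHom TT DD f ∧ ∀ i, f (c.2.1 i) = u i}

lemma IsFtree.tupleHomCount_eq_prod (h : IsFtree TT) (c : Cons TT)
    (φ : {x // x ∈ tsupp c} → D)
    (hφ : (fun i => φ ⟨c.2.1 i, mem_tsupp c i⟩) ∈ DD.rel c.1) :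
    tupleHomCount DD c (fun i => φ ⟨c.2.1 i, mem_tsupp c i⟩) =
      ∏ b, rhomCount (branch c b.1) ⟨b.1, .refl⟩ DD (φ b) := by
  let e : (T → D) ≃ ∀ b : {x // x ∈ tsupp c}, {a // ReachExcept c b a} → D :=
    ((h.branchSigmaEquiv c).symm.arrowCongr (Equiv.refl D)).trans (Equiv.piCurry fun _ _ => D)
  have hsupp (f : T → D) :
      (∀ i, f (c.2.1 i) = φ ⟨c.2.1 i, mem_tsupp c i⟩) ↔
        ∀ b : {x // x ∈ tsupp c}, f b = φ b := by
    refine ⟨fun hf ⟨b, hb⟩ => ?_, fun hf i => hf ⟨c.2.1 i, mem_tsupp c i⟩⟩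
    obtain ⟨i, -, rfl⟩ := mem_image.1 hb
    exact hf i
  calc tupleHomCount DD c (fun i => φ ⟨c.2.1 i, mem_tsupp c i⟩)
      = Nat.card {ψ : ∀ b : {x // x ∈ tsupp c}, {a // ReachExcept c b a} → D //
          ∀ b : {x // x ∈ tsupp c},
            IsHom (branch c b.1) DD (ψ b) ∧ ψ b ⟨b.1, .refl⟩ = φ b} := by
        refine Nat.card_congr (e.subtypeEquiv fun f => ?_)
        rw [h.isHom_iff c, hsupp]
        refine ⟨fun ⟨⟨_, hb⟩, hf⟩ b => ⟨hb b, hf b⟩,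
          fun H => ⟨⟨?_, fun b => (H b).1⟩, ?_⟩⟩
        · convert hφ using 2 with i
          exact (H ⟨c.2.1 i, mem_tsupp c i⟩).2
        · exact fun b => (H b).2
    _ = Nat.card (∀ b : {x // x ∈ tsupp c}, {g : {a // ReachExcept c b a} → D //
          IsHom (branch c b.1) DD g ∧ g ⟨b.1, .refl⟩ = φ b}) :=
        Nat.card_congr <| Equiv.subtypePiEquivPi
          (p := fun b g => IsHom (branch c b.1) DD g ∧ g ⟨b.1, .refl⟩ = φ b)
    _ = ∏ b, rhomCount (branch c b.1) ⟨b.1, .refl⟩ DD (φ b) := Nat.card_pi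

lemma tupleHomCount_eq_zero (c : Cons TT) {u : Fin (ar c.1) → D}
    (hu : ¬ ∀ i j, c.2.1 i = c.2.1 j → u i = u j) : tupleHomCount DD c u = 0 := by
  refine Nat.card_eq_zero.2 (Or.inl ⟨fun ⟨f, _, hf⟩ => hu fun i j hij => ?_⟩)
  rw [← hf i, ← hf j, hij]

lemma exists_eq_comp_of_pattern (c : Cons TT) {u : Fin (ar c.1) → D}
    (hu : ∀ i j, c.2.1 i = c.2.1 j → u i = u j) :
    ∃ φ : {x // x ∈ tsupp c} → D, u = fun i => φ ⟨c.2.1 i, mem_tsupp c i⟩ :=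
  ⟨fun b => u (mem_image.1 b.2).choose,
    funext fun i => hu _ _ ((mem_image.1 (mem_tsupp c i)).choose_spec.2).symm⟩

lemma rhomCount_eq_sum_tupleHomCount [Fintype T] [Fintype D] (c : Cons TT) (s : Fin (ar c.1))
    (d : D) : rhomCount TT (c.2.1 s) DD d =
      ∑ u : {u : {u // u ∈ DD.rel c.1} // u.1 s = d}, tupleHomCount DD c u.1.1 := by
  refine (Nat.card_congr ?_).trans Nat.card_sigma
  exact
    { toFun := fun f =>
        ⟨⟨⟨fun i => f.1 (c.2.1 i), f.2.1 _ _ c.2.2⟩, f.2.2⟩, f.1, f.2.1, fun _ => rfl⟩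
      invFun := fun x => ⟨x.2.1, x.2.2.1, (x.2.2.2 s).trans x.1.2⟩
      left_inv := fun _ => rfl
      right_inv := by
        rintro ⟨⟨⟨u, hu⟩, hs⟩, f, hf, hfu⟩
        obtain rfl : (fun i => f (c.2.1 i)) = u := funext hfu
        rfl }

lemma rhomCount_eq_of_isEmpty_cons [IsEmpty (Cons TT)] (t : T) (d d' : D) :
    rhomCount TT t DD d = rhomCount TT t DD d' := by
  have hom (f : T → D) : IsHom TT DD f :=
    fun R u hu => (IsEmpty.false (α := Cons TT) ⟨R, u, hu⟩).elim
  refine Nat.card_congr (((Equiv.refl T).arrowCongr (Equiv.swap d d')).subtypeEquiv fun f => ?_)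
  simp [hom, Equiv.swap_apply_eq_iff]

end Gluing

section Counting

variable {T D I J : Type} {TT : Struct σ ar T} {DD : Struct σ ar D} {p : D → I}
  {q : Cons DD → J} {cpar : Label σ ar → I → J → ℕ}
  {dpar : Label σ ar → J → I → ℕ}

lemma IsEquitable.tupleHomCount_eq [Finite D] (heq : IsEquitable DD p q cpar dpar)
    (h : IsFtree TT) (c : Cons TT)
    (hbranch : ∀ b : {x // x ∈ tsupp c},
      (rhomCount (branch c b.1) ⟨b.1, .refl⟩ DD).FactorsThrough p)
    {u u' : Fin (ar c.1) → D} {hu : u ∈ DD.rel c.1} {hu' : u' ∈ DD.rel c.1}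
    (hq : q ⟨c.1, u, hu⟩ = q ⟨c.1, u', hu'⟩) :
    tupleHomCount DD c u = tupleHomCount DD c u' := by
  have hcongr := heq.tuple_congr hq
  by_cases hpat : ∀ i j, c.2.1 i = c.2.1 j → u i = u j
  · have hpat' : ∀ i j, c.2.1 i = c.2.1 j → u' i = u' j :=
      fun i j hij => ((hcongr j).2 i).2 (hpat i j hij)
    obtain ⟨φ, rfl⟩ := exists_eq_comp_of_pattern c hpat
    obtain ⟨φ', rfl⟩ := exists_eq_comp_of_pattern c hpat'
    rw [h.tupleHomCount_eq_prod c φ hu, h.tupleHomCount_eq_prod c φ' hu']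
    refine prod_congr rfl fun ⟨b, hb⟩ _ => hbranch _ ?_
    obtain ⟨i, -, rfl⟩ := mem_image.1 hb
    exact (hcongr i).1.symm
  · have hpat' : ¬ ∀ i j, c.2.1 i = c.2.1 j → u' i = u' j :=
      fun h' => hpat fun i j hij => ((hcongr j).2 i).1 (h' i j hij)
    rw [tupleHomCount_eq_zero c hpat, tupleHomCount_eq_zero c hpat']

lemma IsEquitable.rhomCount_factorsThrough_of_branches [Fintype σ] [Fintype T] [Fintype D]
    (heq : IsEquitable DD p q cpar dpar) (h : IsFtree TT) (c : Cons TT) (s : Fin (ar c.1))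
    (hbranch : ∀ b : {x // x ∈ tsupp c},
      (rhomCount (branch c b.1) ⟨b.1, .refl⟩ DD).FactorsThrough p) :
    (rhomCount TT (c.2.1 s) DD).FactorsThrough p := by
  intro d₁ d₂ hd
  rw [rhomCount_eq_sum_tupleHomCount, rhomCount_eq_sum_tupleHomCount]
  refine sum_subtype_eq_of_card_fiber_eq (g := fun u => q ⟨c.1, u⟩)
    (fun _ _ hq => heq.tupleHomCount_eq h c hbranch hq) fun j => ?_
  rw [card_rel_eval_eq DD c.1 s d₁ (q · = j), card_rel_eval_eq DD c.1 s d₂ (q · = j)]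
  exact heq.card_lab_eq (fun ℓ => ∃ S, ℓ = ⟨c.1, S⟩ ∧ s ∈ S) j hd

theorem IsEquitable.rhomCount_factorsThrough [Fintype σ] [Fintype D]
    (heq : IsEquitable DD p q cpar dpar) [Fintype T] (h : IsFtree TT) (t : T) :
    (rhomCount TT t DD).FactorsThrough p := by
  induction hn : Nat.card (Cons TT) using Nat.strong_induction_on generalizing T with
  | _ n ih =>
    subst hn
    cases isEmpty_or_nonempty (Cons TT) with
    | inl _ => exact fun d₁ d₂ _ => rhomCount_eq_of_isEmpty_cons t d₁ d₂
    | inr hne =>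
      obtain ⟨e⟩ := hne
      have : Nontrivial (T ⊕ Cons TT) := ⟨Sum.inl t, Sum.inr e, Sum.inl_ne_inr⟩
      obtain ⟨c, s, rfl⟩ := h.exists_cons_mem t
      exact heq.rhomCount_factorsThrough_of_branches h c s fun b =>
        ih _ (card_cons_branch_lt c b) (isFtree_branch h c b) _ rfl

end Counting

theorem stmt15 [Fintype σ] {D : Type} [Fintype D] (DD : Struct σ ar D)
    {I J : Type} (p : D → I) (q : Cons DD → J)
    (cpar : Label σ ar → I → J → ℕ) (dpar : Label σ ar → J → I → ℕ)
    (heq : IsEquitable DD p q cpar dpar)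
    (d₁ d₂ : D) (hd : p d₁ = p d₂) :
    ∀ (T : Type) (_ : Fintype T) (TT : Struct σ ar T) (t : T),
      IsFtree TT → rhomCount TT t DD d₁ = rhomCount TT t DD d₂ :=
  fun _ _ _ t h => heq.rhomCount_factorsThrough h t hd

end
end

section
/- Let σ be a signature and let 𝐀 and 𝐁 be σ-structures with the same iterated degree sequence, and let ({P_i : i ∈ I}, {Q_j : j ∈ J}) be the partition of the disjoint union 𝐀 ∪ 𝐁 whose P-classes collect the elements of A ∪ B with equal stable iterated degree and whose Q-classes collect the constraints of 𝒞_𝐀 ∪ 𝒞_𝐁 with equal stable iterated degree (taking k large enough that the degree partition has reached a fixed point). Then this partition is an equitable partition of 𝐀 ∪ 𝐁 with |P_i ∩ A| = |P_i ∩ B| for every i ∈ I and |Q_j ∩ 𝒞_𝐀| = |Q_j ∩ 𝒞_𝐁| for every j ∈ J; in particular 𝐀 and 𝐁 have a common equitable partition. -/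
attribute [local instance] Classical.propDecidable

set_option maxHeartbeats 1000000

noncomputable section

variable {σ : Type} {ar : σ → ℕ}

/-!
Colour refinement on `𝐀 ∪ 𝐁` does not mix the two components: by induction on `k`, the
degree `δ_k` of an element or constraint in the union is a function of its degree `δ_k` in its
own component. The only interaction is that every element sees every constraint of the other
component with an empty label `(∅, R)`, and because `𝐀` and `𝐁` have the same iterated degrees
these cross terms are the same on both sides. Hence the two halves of the union have equal
degree multisets at every level.

Since the refinement only splits classes and the universe is finite, the degree partition of a
structure is stable from some level `k₀` on. A stable degree partition is equitable, with
parameters read off from the degrees at level `k₀ + 1`; applied to `𝐀 ∪ 𝐁` this gives the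
equitable partition by stable degrees, and applied jointly to `𝐀` and `𝐁` it gives their common
equitable partition.
-/

open Function Multiset

instance DegT.instNonempty (L : Type) : (k : ℕ) → Nonempty (DegT L k)
  | 0 => ⟨(true : Bool)⟩
  | _ + 1 => ⟨(0 : Multiset _)⟩

theorem Function.FactorsThrough.exists_comp_eq {α β γ : Type*} [Nonempty γ] {f : α → β}
    {g : α → γ} (h : g.FactorsThrough f) : ∃ t : β → γ, ∀ a, t (f a) = g a :=
  ⟨extend f g fun _ => Classical.arbitrary γ, h.extend_apply _⟩

theorem Finset.univ_val_sum {α β : Type*} [Fintype α] [Fintype β] :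
    (univ : Finset (α ⊕ β)).val = univ.val.map Sum.inl + univ.val.map Sum.inr :=
  rfl

theorem Finset.univ_val_map_eq_filter_range {α β : Type*} [Fintype α] [Fintype β]
    {f : α → β} [DecidablePred (· ∈ Set.range f)] (hf : Injective f) :
    univ.val.map f = univ.val.filter (· ∈ Set.range f) :=
  (Multiset.Nodup.ext (univ.nodup.map hf) (univ.nodup.filter _)).2 fun _ => by simp

theorem Nat.card_eq_count_map_univ {α β : Type*} [Fintype α] [DecidableEq β] (f : α → β)
    (b : β) : Nat.card {a // f a = b} = (Finset.univ.val.map f).count b := by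
  rw [count_map, Nat.card_eq_fintype_card, Fintype.card_subtype]
  simp only [eq_comm (a := b)]
  rfl

theorem Multiset.eq_and_eq_of_add_eq_add {α : Type*} {s₁ s₂ t₁ t₂ : Multiset α} (p : α → Prop)
    [DecidablePred p] (h : s₁ + t₁ = s₂ + t₂) (hs₁ : ∀ x ∈ s₁, p x) (hs₂ : ∀ x ∈ s₂, p x)
    (ht₁ : ∀ x ∈ t₁, ¬p x) (ht₂ : ∀ x ∈ t₂, ¬p x) : s₁ = s₂ ∧ t₁ = t₂ := by
  have hs : s₁ = s₂ := by
    simpa only [filter_add, filter_eq_self.2 hs₁, filter_eq_self.2 hs₂, filter_eq_nil.2 ht₁,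
      filter_eq_nil.2 ht₂, add_zero] using congrArg (filter p) h
  exact ⟨hs, add_left_cancel (hs ▸ h)⟩

theorem Multiset.map_inl_eq_map_inr_of_factorsThrough {α β γ δ : Type*} {f : α ⊕ β → γ}
    {g : α ⊕ β → δ} (hgf : g.FactorsThrough f) {s : Multiset α} {t : Multiset β}
    (h : s.map (fun a => f (.inl a)) = t.map fun b => f (.inr b)) :
    s.map (fun a => g (.inl a)) = t.map fun b => g (.inr b) := by
  rcases isEmpty_or_nonempty (α ⊕ β) with hαβ | ⟨⟨x⟩⟩
  · rw [eq_zero_of_forall_notMem (s := s) fun a _ => hαβ.false (.inl a),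
      eq_zero_of_forall_notMem (s := t) fun b _ => hαβ.false (.inr b), map_zero, map_zero]
  · have : Nonempty δ := ⟨g x⟩
    obtain ⟨u, hu⟩ := hgf.exists_comp_eq
    simpa only [map_map, comp_def, hu] using congrArg (map u) h

theorem exists_forall_factorsThrough {X : Type*} [Finite X] {β : ℕ → Type*}
    (f : ∀ k, X → β k) (hf : ∀ k, (f k).FactorsThrough (f (k + 1))) :
    ∃ k₀, ∀ m, (f m).FactorsThrough (f k₀) := by
  let ker : ℕ → Set (X × X) := fun k => {p | f k p.1 = f k p.2}
  have hker : Antitone ker := antitone_nat_of_succ_le fun k _ hp => hf k hp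
  obtain ⟨k₀, hk₀⟩ := WellFoundedLT.antitone_chain_condition hker
  refine ⟨k₀, fun m x y hxy => ?_⟩
  rcases le_total k₀ m with hm | hm
  · exact (hk₀ m hm ▸ hxy : (x, y) ∈ ker m)
  · exact hker hm (show (x, y) ∈ ker k₀ from hxy)

section IterDeg

variable {A B : Type} [Fintype σ] [Fintype A] [Fintype B]

theorem iterDeg_succ_inl (S : Struct σ ar A) (k : ℕ) (a : A) :
    (iterDeg S (k + 1) (.inl a) : Multiset (Label σ ar × DegT (Label σ ar) k)) =
      Finset.univ.val.map fun c => (lab S a c, iterDeg S k (.inr c)) := rfl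

theorem iterDeg_succ_inr (S : Struct σ ar A) (k : ℕ) (c : Cons S) :
    (iterDeg S (k + 1) (.inr c) : Multiset (Label σ ar × DegT (Label σ ar) k)) =
      Finset.univ.val.map fun a => (lab S a c, iterDeg S k (.inl a)) := rfl

theorem iterDeg_succ_eq_map (S : Struct σ ar A) {k m : ℕ}
    {t : DegT (Label σ ar) k → DegT (Label σ ar) m}
    (ht : ∀ x, t (iterDeg S k x) = iterDeg S m x) (x : A ⊕ Cons S) :
    iterDeg S (m + 1) x = (iterDeg S (k + 1) x : Multiset _).map (Prod.map id t) := by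
  rcases x with a | c
  · simp only [iterDeg_succ_inl, map_map, comp_def, Prod.map, id, ht]
    rfl
  · simp only [iterDeg_succ_inr, map_map, comp_def, Prod.map, id, ht]
    rfl

theorem iterDeg_one_inl_ne_inr {S : Struct σ ar A} {T : Struct σ ar B}
    (hC : Fintype.card (Cons S) = Fintype.card (Cons T)) (a : A) (c : Cons T) :
    iterDeg S 1 (.inl a) ≠ iterDeg T 1 (.inr c) := by
  obtain ⟨c₀⟩ : Nonempty (Cons S) := Fintype.card_pos_iff.1 (hC ▸ Fintype.card_pos_iff.2 ⟨c⟩)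
  intro h
  have hmem : (lab S a c₀, iterDeg S 0 (.inr c₀)) ∈
      Finset.univ.val.map fun b => (lab T b c, iterDeg T 0 (.inl b)) := by
    rw [← iterDeg_succ_inr, ← h]
    exact mem_map_of_mem _ (Finset.mem_univ c₀)
  obtain ⟨b, -, hb⟩ := mem_map.1 hmem
  exact Bool.noConfusion (congrArg Prod.snd hb : true = false)

theorem fst_eq_of_iterDeg_succ_inr_eq [Nonempty A] {S : Struct σ ar A} {T : Struct σ ar B}
    {k : ℕ} {c : Cons S} {c' : Cons T}
    (h : iterDeg S (k + 1) (.inr c) = iterDeg T (k + 1) (.inr c')) :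
    c.1 = c'.1 := by
  obtain ⟨a⟩ := ‹Nonempty A›
  have hmem : (lab S a c, iterDeg S k (.inl a)) ∈
      Finset.univ.val.map fun b => (lab T b c', iterDeg T k (.inl b)) := by
    rw [← iterDeg_succ_inr, ← h]
    exact mem_map_of_mem _ (Finset.mem_univ a)
  obtain ⟨b, -, hb⟩ := mem_map.1 hmem
  exact congrArg (fun p => p.1.1) hb.symm

def sumIterDeg (S : Struct σ ar A) (T : Struct σ ar B) (k : ℕ) :
    (A ⊕ Cons S) ⊕ (B ⊕ Cons T) → DegT (Label σ ar) k :=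
  Sum.elim (iterDeg S k) (iterDeg T k)

variable {S : Struct σ ar A} {T : Struct σ ar B}

theorem Function.FactorsThrough.sumIterDeg_succ {k m : ℕ}
    (h : (sumIterDeg S T m).FactorsThrough (sumIterDeg S T k)) :
    (sumIterDeg S T (m + 1)).FactorsThrough (sumIterDeg S T (k + 1)) := by
  obtain ⟨t, ht⟩ := h.exists_comp_eq
  have key : ∀ z, sumIterDeg S T (m + 1) z =
      (sumIterDeg S T (k + 1) z : Multiset _).map (Prod.map id t) := by
    rintro (x | y)
    · exact iterDeg_succ_eq_map S (fun x => ht (.inl x)) x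
    · exact iterDeg_succ_eq_map T (fun y => ht (.inr y)) y
  intro z z' e
  rw [key, key, e]

theorem sumIterDeg_factorsThrough_succ (hC : Fintype.card (Cons S) = Fintype.card (Cons T)) :
    ∀ k, (sumIterDeg S T k).FactorsThrough (sumIterDeg S T (k + 1))
  | 0 => by
    intro z z' h
    rcases z with (a | c) | (a | c) <;> rcases z' with (a' | c') | (a' | c') <;>
      first
      | rfl
      | exact absurd h (iterDeg_one_inl_ne_inr (by first | rfl | exact hC | exact hC.symm) _ _)
      | exact absurd h.symm (iterDeg_one_inl_ne_inr (by first | rfl | exact hC | exact hC.symm) _ _)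
  | k + 1 => (sumIterDeg_factorsThrough_succ hC k).sumIterDeg_succ

theorem sumIterDeg_zero_factorsThrough (hC : Fintype.card (Cons S) = Fintype.card (Cons T))
    (k : ℕ) : (sumIterDeg S T 0).FactorsThrough (sumIterDeg S T k) := by
  induction k with
  | zero => exact fun _ _ h => h
  | succ k ih => exact fun _ _ h => ih (sumIterDeg_factorsThrough_succ hC k h)

theorem iterDeg_factorsThrough_succ (S : Struct σ ar A) (k : ℕ) :
    (iterDeg S k).FactorsThrough (iterDeg S (k + 1)) := fun x y h =>
  sumIterDeg_factorsThrough_succ (T := S) rfl k (a := .inl x) (b := .inl y) h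

end IterDeg

section SameIterDeg

variable {A B : Type} [Fintype σ] [Fintype A] [Fintype B] {AA : Struct σ ar A}
  {BB : Struct σ ar B}

theorem map_iterDeg_inl_eq_and_inr_eq {k : ℕ} (t : DegT (Label σ ar) k → Bool)
    (htA : ∀ x, t (iterDeg AA k x) = x.isLeft) (htB : ∀ x, t (iterDeg BB k x) = x.isLeft)
    (hk : Finset.univ.val.map (iterDeg AA k) = Finset.univ.val.map (iterDeg BB k)) :
    (Finset.univ.val.map fun a => iterDeg AA k (.inl a)) =
        (Finset.univ.val.map fun b => iterDeg BB k (.inl b)) ∧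
      (Finset.univ.val.map fun c => iterDeg AA k (.inr c)) =
        Finset.univ.val.map fun c => iterDeg BB k (.inr c) := by
  simp only [Finset.univ_val_sum, Multiset.map_add, map_map] at hk
  refine eq_and_eq_of_add_eq_add (fun v => t v = true) hk ?_ ?_ ?_ ?_ <;>
    simp [htA, htB]

theorem SameIterDeg.card_cons_eq (h : SameIterDeg AA BB) :
    Fintype.card (Cons AA) = Fintype.card (Cons BB) := by
  simpa using congrArg card
    (map_iterDeg_inl_eq_and_inr_eq id (fun _ => rfl) (fun _ => rfl) (h 0)).2

theorem SameIterDeg.map_iterDeg_eq (h : SameIterDeg AA BB) (k : ℕ) :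
    (Finset.univ.val.map fun a => iterDeg AA k (.inl a)) =
        (Finset.univ.val.map fun b => iterDeg BB k (.inl b)) ∧
      (Finset.univ.val.map fun c => iterDeg AA k (.inr c)) =
        Finset.univ.val.map fun c => iterDeg BB k (.inr c) := by
  obtain ⟨t, ht⟩ := (sumIterDeg_zero_factorsThrough h.card_cons_eq k).exists_comp_eq
  exact map_iterDeg_inl_eq_and_inr_eq t (fun x => ht (.inl x)) (fun x => ht (.inr x)) (h k)

theorem SameIterDeg.card_eq (h : SameIterDeg AA BB) : Fintype.card A = Fintype.card B := by
  simpa using congrArg card (h.map_iterDeg_eq 0).1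

end SameIterDeg

theorem IsEquitable.of_comp {A : Type} {S : Struct σ ar A} {I I' J J' : Type*} {p : A → I}
    {q : Cons S → J} {f : I → I'} {g : J → J'} {cpar : Label σ ar → I' → J' → ℕ}
    {dpar : Label σ ar → J' → I' → ℕ} (hf : ∀ a a', f (p a) = f (p a') → p a = p a')
    (hg : ∀ c c', g (q c) = g (q c') → q c = q c')
    (h : IsEquitable S (fun a => f (p a)) (fun c => g (q c)) cpar dpar) :
    ∃ cpar' dpar', IsEquitable S p q cpar' dpar' := by
  refine ⟨fun ℓ i j => if ∃ c, q c = j then cpar ℓ (f i) (g j) else 0,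
    fun ℓ j i => if ∃ a, p a = i then dpar ℓ (g j) (f i) else 0, fun a ℓ j => ?_,
    fun c ℓ i => ?_⟩
  · dsimp only
    split_ifs with hj
    · obtain ⟨c₀, rfl⟩ := hj
      rw [← h.1 a ℓ]
      exact Nat.card_congr (Equiv.subtypeEquivRight fun c =>
        and_congr_left fun _ => ⟨congrArg g, hg c c₀⟩)
    · exact @Nat.card_of_isEmpty _ ⟨fun c => hj ⟨c.1, c.2.1⟩⟩
  · dsimp only
    split_ifs with hi
    · obtain ⟨a₀, rfl⟩ := hi
      rw [← h.2 c ℓ]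
      exact Nat.card_congr (Equiv.subtypeEquivRight fun a =>
        and_congr_left fun _ => ⟨congrArg f, hf a a₀⟩)
    · exact @Nat.card_of_isEmpty _ ⟨fun a => hi ⟨a.1, a.2.1⟩⟩

theorem isEquitable_iterDeg {A : Type} [Fintype σ] [Fintype A] (S : Struct σ ar A) {k : ℕ}
    (s : DegT (Label σ ar) k → DegT (Label σ ar) (k + 1))
    (hs : ∀ x, s (iterDeg S k x) = iterDeg S (k + 1) x) :
    IsEquitable S (fun a => iterDeg S k (.inl a)) (fun c => iterDeg S k (.inr c))
      (fun ℓ u v => count (ℓ, v) (s u)) (fun ℓ v u => count (ℓ, u) (s v)) := by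
  refine ⟨fun a ℓ v => ?_, fun c ℓ u => ?_⟩
  · calc Nat.card _ = Nat.card {c // (lab S a c, iterDeg S k (.inr c)) = (ℓ, v)} :=
          Nat.card_congr (Equiv.subtypeEquivRight fun c => by rw [Prod.ext_iff, and_comm])
      _ = _ := Nat.card_eq_count_map_univ _ _
      _ = _ := congrArg (count (ℓ, v)) (hs (.inl a)).symm
  · calc Nat.card _ = Nat.card {a // (lab S a c, iterDeg S k (.inl a)) = (ℓ, u)} :=
          Nat.card_congr (Equiv.subtypeEquivRight fun a => by rw [Prod.ext_iff, and_comm])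
      _ = _ := Nat.card_eq_count_map_univ _ _
      _ = _ := congrArg (count (ℓ, u)) (hs (.inr c)).symm

section DisjointUnion

variable {A B : Type} (AA : Struct σ ar A) (BB : Struct σ ar B)

local notation "𝐔" => dUnion AA BB

def consEmb : Cons AA ⊕ Cons BB → Cons 𝐔 :=
  Sum.elim (consInl AA BB) (consInr AA BB)

@[simp]
theorem lab_dUnion_inl_consInl (a : A) (c : Cons AA) :
    lab 𝐔 (.inl a) (consInl AA BB c) = lab AA a c := by
  refine congrArg (Sigma.mk c.1) (Finset.ext fun i => ?_)
  simp [consInl]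
  exact Iff.rfl

@[simp]
theorem lab_dUnion_inr_consInr (b : B) (c : Cons BB) :
    lab 𝐔 (.inr b) (consInr AA BB c) = lab BB b c := by
  refine congrArg (Sigma.mk c.1) (Finset.ext fun i => ?_)
  simp [consInr]
  exact Iff.rfl

@[simp]
theorem lab_dUnion_inr_consInl (b : B) (c : Cons AA) :
    lab 𝐔 (.inr b) (consInl AA BB c) = ⟨c.1, ∅⟩ := by
  refine congrArg (Sigma.mk c.1) (Finset.ext fun i => ?_)
  simp [consInl]

@[simp]
theorem lab_dUnion_inl_consInr (a : A) (c : Cons BB) :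
    lab 𝐔 (.inl a) (consInr AA BB c) = ⟨c.1, ∅⟩ := by
  refine congrArg (Sigma.mk c.1) (Finset.ext fun i => ?_)
  simp [consInr]

theorem consInl_injective : Injective (consInl AA BB) := by
  rintro ⟨R, u, hu⟩ ⟨R', u', hu'⟩ e
  obtain ⟨rfl, e⟩ := Sigma.mk.inj_iff.1 e
  have e := congrArg Subtype.val (eq_of_heq e)
  simp only [funext_iff, Sum.inl.injEq] at e
  simp only [funext e]
  rfl

theorem consInr_injective : Injective (consInr AA BB) := by
  rintro ⟨R, u, hu⟩ ⟨R', u', hu'⟩ e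
  obtain ⟨rfl, e⟩ := Sigma.mk.inj_iff.1 e
  have e := congrArg Subtype.val (eq_of_heq e)
  simp only [funext_iff, Sum.inr.injEq] at e
  simp only [funext e]
  rfl

variable [Fintype σ] [Fintype A] [Fintype B]

def elemDeg (k : ℕ) : A ⊕ B → DegT (Label σ ar) k :=
  sumIterDeg AA BB k ∘ Sum.map .inl .inl

def consDeg (k : ℕ) : Cons AA ⊕ Cons BB → DegT (Label σ ar) k :=
  sumIterDeg AA BB k ∘ Sum.map .inr .inr

/-- A nullary constraint present in both `AA` and `BB` is a single constraint of the union. -/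
def sharedCons : Multiset (Cons 𝐔) :=
  Finset.univ.val.filter fun c => c ∈ Set.range (consInl AA BB) ∧ c ∈ Set.range (consInr AA BB)

theorem map_consEmb_univ :
    Finset.univ.val.map (consEmb AA BB) = Finset.univ.val + sharedCons AA BB := by
  have hcover : ∀ c ∈ (Finset.univ : Finset (Cons 𝐔)).val,
      c ∈ Set.range (consInl AA BB) ∨ c ∈ Set.range (consInr AA BB) := by
    rintro ⟨R, u, (⟨v, hv, rfl⟩ | ⟨v, hv, rfl⟩)⟩ -
    exacts [.inl ⟨⟨R, v, hv⟩, rfl⟩, .inr ⟨⟨R, v, hv⟩, rfl⟩]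
  rw [Finset.univ_val_sum, Multiset.map_add, map_map, map_map, consEmb, Sum.elim_comp_inl,
    Sum.elim_comp_inr, Finset.univ_val_map_eq_filter_range (consInl_injective AA BB),
    Finset.univ_val_map_eq_filter_range (consInr_injective AA BB), filter_add_filter,
    filter_eq_self.2 hcover]
  rfl

theorem lab_of_mem_sharedCons {c : Cons 𝐔} (hc : c ∈ sharedCons AA BB)
    (x : A ⊕ B) : lab 𝐔 x c = ⟨c.1, ∅⟩ := by
  obtain ⟨-, ⟨c₁, rfl⟩, ⟨c₂, hc₂⟩⟩ := mem_filter.1 hc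
  have hl : ∀ i, ((consInl AA BB c₁).2.1 i).isLeft = true := fun _ => rfl
  have hr : ∀ i, ((consInr AA BB c₂).2.1 i).isLeft = false := fun _ => rfl
  rw [hc₂] at hr
  have : IsEmpty (Fin (ar (consInl AA BB c₁).1)) := ⟨fun i => by simpa [hl i] using hr i⟩
  exact congrArg (Sigma.mk _) (Finset.eq_empty_of_isEmpty _)

theorem map_lab_add_map_sharedCons (k : ℕ) (x : A ⊕ B) :
    (Finset.univ.val.map fun c => (lab 𝐔 x c, iterDeg 𝐔 k (.inr c))) +
        (sharedCons AA BB).map (fun c => ((⟨c.1, ∅⟩ : Label σ ar), iterDeg 𝐔 k (.inr c))) =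
      Finset.univ.val.map fun u =>
        (lab 𝐔 x (consEmb AA BB u), iterDeg 𝐔 k (.inr (consEmb AA BB u))) := by
  have h := congrArg (map fun c => (lab 𝐔 x c, iterDeg 𝐔 k (.inr c)))
    (map_consEmb_univ AA BB)
  rw [map_map, Multiset.map_add] at h
  refine Eq.trans ?_ h.symm
  congr 1
  exact map_congr rfl fun c hc => by rw [lab_of_mem_sharedCons AA BB hc]

theorem consEmb_fst_eq_of_consDeg_succ_eq [Nonempty A] [Nonempty B] {k : ℕ}
    {u u' : Cons AA ⊕ Cons BB} (e : consDeg AA BB (k + 1) u = consDeg AA BB (k + 1) u') :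
    (consEmb AA BB u).1 = (consEmb AA BB u').1 := by
  rcases u with c | c <;> rcases u' with c' | c' <;> exact (fst_eq_of_iterDeg_succ_inr_eq e :)

variable {AA BB}

theorem SameIterDeg.map_fst_iterDeg_inr_eq (h : SameIterDeg AA BB) [Nonempty A] [Nonempty B]
    (k : ℕ) :
    (Finset.univ.val.map fun c : Cons AA => (c.1, iterDeg AA k (.inr c))) =
      Finset.univ.val.map fun c : Cons BB => (c.1, iterDeg BB k (.inr c)) :=
  map_inl_eq_map_inr_of_factorsThrough (f := consDeg AA BB (k + 1))
    (g := fun u => ((consEmb AA BB u).1, consDeg AA BB k u))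
    (fun _ _ e => Prod.ext (consEmb_fst_eq_of_consDeg_succ_eq AA BB e)
      (sumIterDeg_factorsThrough_succ h.card_cons_eq k e))
    (h.map_iterDeg_eq (k + 1)).2

theorem iterDeg_dUnion_inl_factorsThrough_succ (h : SameIterDeg AA BB) {k : ℕ}
    (hk : (fun u => iterDeg 𝐔 k (.inr (consEmb AA BB u))).FactorsThrough (consDeg AA BB k)) :
    (fun x => iterDeg 𝐔 (k + 1) (.inl x)).FactorsThrough (elemDeg AA BB (k + 1)) := by
  obtain ⟨t, ht⟩ := hk.exists_comp_eq
  have htA : ∀ c, iterDeg 𝐔 k (.inr (consInl AA BB c)) = t (iterDeg AA k (.inr c)) :=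
    fun c => (ht (.inl c)).symm
  have htB : ∀ c, iterDeg 𝐔 k (.inr (consInr AA BB c)) = t (iterDeg BB k (.inr c)) :=
    fun c => (ht (.inr c)).symm
  -- an element sees each constraint of the other component with an empty label
  let crossA := Finset.univ.val.map fun c : Cons AA =>
    ((⟨c.1, ∅⟩ : Label σ ar), t (iterDeg AA k (.inr c)))
  let crossB := Finset.univ.val.map fun c : Cons BB =>
    ((⟨c.1, ∅⟩ : Label σ ar), t (iterDeg BB k (.inr c)))
  have hsplit : ∀ x, (Finset.univ.val.map fun u => (lab 𝐔 x (consEmb AA BB u),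
      iterDeg 𝐔 k (.inr (consEmb AA BB u)))) =
      (elemDeg AA BB (k + 1) x : Multiset _).map (Prod.map id t) +
        x.elim (fun _ => crossB) fun _ => crossA := by
    rintro (a | b)
    · simp [Finset.univ_val_sum, Multiset.map_add, map_map, consEmb, elemDeg, sumIterDeg,
        iterDeg_succ_inl, htA, htB, crossB]
    · simp [Finset.univ_val_sum, Multiset.map_add, map_map, consEmb, elemDeg, sumIterDeg,
        iterDeg_succ_inl, htA, htB, crossA, add_comm]
  have hcross : ∀ (a : A) (b : B), crossA = crossB := fun a b => by
    have : Nonempty A := ⟨a⟩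
    have : Nonempty B := ⟨b⟩
    simpa [crossA, crossB, map_map, comp_def] using
      congrArg (map fun p => ((⟨p.1, ∅⟩ : Label σ ar), t p.2)) (h.map_fst_iterDeg_inr_eq k)
  intro x x' e
  have hx := (map_lab_add_map_sharedCons AA BB k x).trans (hsplit x)
  have hx' := (map_lab_add_map_sharedCons AA BB k x').trans (hsplit x')
  show (Finset.univ.val.map fun c => (lab 𝐔 x c, iterDeg 𝐔 k (.inr c))) =
    Finset.univ.val.map fun c => (lab 𝐔 x' c, iterDeg 𝐔 k (.inr c))
  refine add_right_cancel (hx.trans (Eq.trans ?_ hx'.symm))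
  rw [e]
  congr 1
  rcases x with a | b <;> rcases x' with a' | b'
  exacts [rfl, (hcross a b').symm, hcross a' b, rfl]

theorem iterDeg_dUnion_inr_factorsThrough_succ (h : SameIterDeg AA BB) {k : ℕ}
    (hk : (fun x => iterDeg 𝐔 k (.inl x)).FactorsThrough (elemDeg AA BB k)) :
    (fun u => iterDeg 𝐔 (k + 1) (.inr (consEmb AA BB u))).FactorsThrough
      (consDeg AA BB (k + 1)) := by
  obtain ⟨t, ht⟩ := hk.exists_comp_eq
  have htA : ∀ a, iterDeg 𝐔 k (.inl (.inl a)) = t (iterDeg AA k (.inl a)) :=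
    fun a => (ht (.inl a)).symm
  have htB : ∀ b, iterDeg 𝐔 k (.inl (.inr b)) = t (iterDeg BB k (.inl b)) :=
    fun b => (ht (.inr b)).symm
  -- every element of the other component sees a constraint with symbol `R` with label `⟨R, ∅⟩`
  let cross : σ → Multiset (Label σ ar × DegT (Label σ ar) k) := fun R =>
    Finset.univ.val.map fun a : A => ((⟨R, ∅⟩ : Label σ ar), t (iterDeg AA k (.inl a)))
  have hcrossB : ∀ R, (Finset.univ.val.map fun b : B =>
      ((⟨R, ∅⟩ : Label σ ar), t (iterDeg BB k (.inl b)))) = cross R := fun R => by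
    simpa [cross, map_map, comp_def] using
      (congrArg (map fun v => ((⟨R, ∅⟩ : Label σ ar), t v)) (h.map_iterDeg_eq k).1).symm
  have hsplit : ∀ u, (iterDeg 𝐔 (k + 1) (.inr (consEmb AA BB u)) : Multiset _) =
      (consDeg AA BB (k + 1) u : Multiset _).map (Prod.map id t) + cross (consEmb AA BB u).1 := by
    rintro (c | c)
    · rw [← hcrossB]
      simp [Finset.univ_val_sum, Multiset.map_add, map_map, consEmb, consDeg, sumIterDeg,
        iterDeg_succ_inr, htA, htB]
      rfl
    · simp [Finset.univ_val_sum, Multiset.map_add, map_map, consEmb, consDeg, sumIterDeg,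
        iterDeg_succ_inr, htA, htB, cross, add_comm]
      rfl
  intro u u' e
  have hcross : cross (consEmb AA BB u).1 = cross (consEmb AA BB u').1 := by
    rcases isEmpty_or_nonempty A with hA | hA
    · simp [cross, Finset.univ_eq_empty]
    · have : Nonempty B := Fintype.card_pos_iff.1 (h.card_eq ▸ Fintype.card_pos)
      rw [consEmb_fst_eq_of_consDeg_succ_eq AA BB e]
  calc iterDeg 𝐔 (k + 1) (.inr (consEmb AA BB u)) = _ := hsplit u
    _ = _ := by rw [e, hcross]
    _ = iterDeg 𝐔 (k + 1) (.inr (consEmb AA BB u')) := (hsplit u').symm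

theorem iterDeg_dUnion_factorsThrough (h : SameIterDeg AA BB) :
    ∀ k, (fun x => iterDeg 𝐔 k (.inl x)).FactorsThrough (elemDeg AA BB k) ∧
      (fun u => iterDeg 𝐔 k (.inr (consEmb AA BB u))).FactorsThrough (consDeg AA BB k)
  | 0 => ⟨fun _ _ _ => rfl, fun _ _ _ => rfl⟩
  | k + 1 =>
    ⟨iterDeg_dUnion_inl_factorsThrough_succ h (iterDeg_dUnion_factorsThrough h k).2,
      iterDeg_dUnion_inr_factorsThrough_succ h (iterDeg_dUnion_factorsThrough h k).1⟩

theorem SameIterDeg.map_iterDeg_dUnion_eq (h : SameIterDeg AA BB) (k : ℕ) :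
    (Finset.univ.val.map fun a => iterDeg 𝐔 k (.inl (.inl a))) =
        (Finset.univ.val.map fun b => iterDeg 𝐔 k (.inl (.inr b))) ∧
      (Finset.univ.val.map fun c => iterDeg 𝐔 k (.inr (consInl AA BB c))) =
        Finset.univ.val.map fun c => iterDeg 𝐔 k (.inr (consInr AA BB c)) :=
  ⟨map_inl_eq_map_inr_of_factorsThrough (iterDeg_dUnion_factorsThrough h k).1
      (h.map_iterDeg_eq k).1,
    map_inl_eq_map_inr_of_factorsThrough (iterDeg_dUnion_factorsThrough h k).2
      (h.map_iterDeg_eq k).2⟩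

end DisjointUnion

theorem exists_forall_iterDeg_factorsThrough {A : Type} [Fintype σ] [Fintype A]
    (S : Struct σ ar A) : ∃ k₀, ∀ m, (iterDeg S m).FactorsThrough (iterDeg S k₀) :=
  exists_forall_factorsThrough _ (iterDeg_factorsThrough_succ S)

theorem SameIterDeg.commonEquitable {A B : Type} [Fintype σ] [Fintype A] [Fintype B]
    {AA : Struct σ ar A} {BB : Struct σ ar B} (h : SameIterDeg AA BB) : CommonEquitable AA BB := by
  obtain ⟨k₀, hk₀⟩ := exists_forall_factorsThrough _
    (sumIterDeg_factorsThrough_succ h.card_cons_eq)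
  obtain ⟨s, hs⟩ := (hk₀ (k₀ + 1)).exists_comp_eq
  refine ⟨_, _, _, _, _, _, _, _, isEquitable_iterDeg AA s fun x => hs (.inl x),
    isEquitable_iterDeg BB s fun x => hs (.inr x), fun v => ?_, fun v => ?_⟩
  · rw [Nat.card_eq_count_map_univ (fun a => iterDeg AA k₀ (.inl a)),
      Nat.card_eq_count_map_univ (fun b => iterDeg BB k₀ (.inl b)), (h.map_iterDeg_eq k₀).1]
  · rw [Nat.card_eq_count_map_univ (fun c => iterDeg AA k₀ (.inr c)),
      Nat.card_eq_count_map_univ (fun c => iterDeg BB k₀ (.inr c)), (h.map_iterDeg_eq k₀).2]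

theorem stmt19 [Fintype σ] {A B : Type} [Fintype A] [Fintype B]
    (AA : Struct σ ar A) (BB : Struct σ ar B) (h : SameIterDeg AA BB) :
    (∃ cpar dpar, IsEquitable (dUnion AA BB) (degPclass AA BB) (degQclass AA BB) cpar dpar) ∧
    (∀ i : (k : ℕ) → DegT (Label σ ar) k,
      Nat.card {a : A // degPclass AA BB (Sum.inl a) = i} =
        Nat.card {b : B // degPclass AA BB (Sum.inr b) = i}) ∧
    (∀ j : (k : ℕ) → DegT (Label σ ar) k,
      Nat.card {c : Cons AA // degQclass AA BB (consInl AA BB c) = j} =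
        Nat.card {c : Cons BB // degQclass AA BB (consInr AA BB c) = j}) ∧
    CommonEquitable AA BB := by
  obtain ⟨k₀, hk₀⟩ := exists_forall_iterDeg_factorsThrough (dUnion AA BB)
  have hP : (degPclass AA BB).FactorsThrough fun x => iterDeg (dUnion AA BB) k₀ (.inl x) :=
    fun _ _ e => funext fun m => hk₀ m e
  have hQ : (degQclass AA BB).FactorsThrough fun c => iterDeg (dUnion AA BB) k₀ (.inr c) :=
    fun _ _ e => funext fun m => hk₀ m e
  obtain ⟨s, hs⟩ := (hk₀ (k₀ + 1)).exists_comp_eq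
  refine ⟨(isEquitable_iterDeg _ s hs).of_comp (f := fun i => i k₀) (g := fun j => j k₀)
    (fun _ _ e => hP e) (fun _ _ e => hQ e), fun i => ?_, fun j => ?_, h.commonEquitable⟩
  · rw [Nat.card_eq_count_map_univ (fun a => degPclass AA BB (.inl a)),
      Nat.card_eq_count_map_univ (fun b => degPclass AA BB (.inr b)),
      map_inl_eq_map_inr_of_factorsThrough hP (h.map_iterDeg_dUnion_eq k₀).1]
  · rw [Nat.card_eq_count_map_univ (fun c => degQclass AA BB (consInl AA BB c)),
      Nat.card_eq_count_map_univ (fun c => degQclass AA BB (consInr AA BB c))]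
    exact congrArg (count j) (map_inl_eq_map_inr_of_factorsThrough
      (g := fun u => degQclass AA BB (consEmb AA BB u)) (fun _ _ e => hQ e)
      (h.map_iterDeg_dUnion_eq k₀).2)

end
end
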